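/- arXiv:1510.02396 — 5 statements merged into one kernel-verified Lean document; each statement's English description precedes it below -/
import Mathlib

section
/- Let g, h₀, k > 0, γ ∈ ℝ, let U(y) = γy on [0,h₀], and let c > max_{0≤y≤h₀} U(y) (so that c − γh₀ > 0 and c − γy ≠ 0 on [0,h₀]). The bifurcation problem — find φ ∈ C²([0,h₀]) with (γy − c)(φ''(y) − k²φ(y)) = 0 for 0 < y < h₀, φ(0) = 0, and φ'(h₀) = (g/(γh₀−c)² + γ/(γh₀−c))·φ(h₀) — admits a solution φ that is not identically zero if and only if c − γh₀ = −γ·tanh(k h₀)/(2k) + √(γ²tanh²(k h₀)/(4k²) + g·tanh(k h₀)/k), equivalently if and only if k(c−γh₀)² + γ·tanh(k h₀)(c−γh₀) − g·tanh(k h₀) = 0 (the dispersion relation for constant vorticity −γ). -/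
/-!
Since `c > γ y` on `[0, h₀]`, the Rayleigh equation reduces to `φ'' = k² φ`. The Wronskians of
such a `φ` with `sinh (k y)` and `cosh (k y)` are constant, so `φ 0 = 0` forces
`k φ y = φ'(0) sinh (k y)` and `φ' y = φ'(0) cosh (k y)`, with `φ'(0) ≠ 0` for a nontrivial
solution. The boundary condition at `h₀` then reads
`k cosh (k h₀) = (g / (γh₀ - c)² + γ / (γh₀ - c)) sinh (k h₀)`, which after multiplication
by `(c - γh₀)² / cosh (k h₀)` is the quadratic dispersion relation in `c - γh₀`; since
`g tanh (k h₀) ≥ 0`, its only positive root is the square-root formula.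
-/

open Real Set

theorem wronskian_eq_on_Icc {φ φ' φ'' ψ ψ' ψ'' q : ℝ → ℝ} {a b : ℝ}
    (hφ : ∀ y ∈ Icc a b, HasDerivAt φ (φ' y) y) (hφ' : ∀ y ∈ Icc a b, HasDerivAt φ' (φ'' y) y)
    (hψ : ∀ y ∈ Icc a b, HasDerivAt ψ (ψ' y) y) (hψ' : ∀ y ∈ Icc a b, HasDerivAt ψ' (ψ'' y) y)
    (hφ'' : ∀ y ∈ Icc a b, φ'' y = q y * φ y) (hψ'' : ∀ y ∈ Icc a b, ψ'' y = q y * ψ y) :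
    ∀ y ∈ Icc a b, φ' y * ψ y - φ y * ψ' y = φ' a * ψ a - φ a * ψ' a := by
  have hW : ∀ y ∈ Icc a b, HasDerivAt (fun y => φ' y * ψ y - φ y * ψ' y) 0 y := by
    intro y hy
    refine (((hφ' y hy).mul (hψ y hy)).sub ((hφ y hy).mul (hψ' y hy))).congr_deriv ?_
    rw [hφ'' y hy, hψ'' y hy]
    ring
  exact constant_of_has_deriv_right_zero
    (fun y hy => (hW y hy).continuousAt.continuousWithinAt)
    (fun y hy => (hW y (Ico_subset_Icc_self hy)).hasDerivWithinAt)

theorem hasDerivAt_sinh_mul (k y : ℝ) :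
    HasDerivAt (fun y => sinh (k * y)) (k * cosh (k * y)) y := by
  simpa [mul_comm] using ((hasDerivAt_id y).const_mul k).sinh

theorem hasDerivAt_cosh_mul (k y : ℝ) :
    HasDerivAt (fun y => cosh (k * y)) (k * sinh (k * y)) y := by
  simpa [mul_comm] using ((hasDerivAt_id y).const_mul k).cosh

theorem deriv_sinh_mul (k : ℝ) : deriv (fun y => sinh (k * y)) = fun y => k * cosh (k * y) :=
  funext fun y => (hasDerivAt_sinh_mul k y).deriv

theorem deriv_deriv_sinh_mul (k y : ℝ) :
    deriv (deriv fun y => sinh (k * y)) y = k ^ 2 * sinh (k * y) := by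
  rw [deriv_sinh_mul, ((hasDerivAt_cosh_mul k y).const_mul k).deriv]
  ring

theorem eq_sinh_of_deriv_deriv_eq {φ : ℝ → ℝ} {k h : ℝ}
    (hφ : Differentiable ℝ φ) (hφ' : Differentiable ℝ (deriv φ))
    (hode : ∀ y ∈ Icc 0 h, deriv (deriv φ) y = k ^ 2 * φ y) (h0 : φ 0 = 0) :
    ∀ y ∈ Icc 0 h, k * φ y = deriv φ 0 * sinh (k * y) ∧
      deriv φ y = deriv φ 0 * cosh (k * y) := by
  have wronskian {ψ ψ' : ℝ → ℝ} (hψ : ∀ y, HasDerivAt ψ (ψ' y) y)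
      (hψ' : ∀ y, HasDerivAt ψ' (k ^ 2 * ψ y) y) :=
    wronskian_eq_on_Icc (fun y _ => (hφ y).hasDerivAt) (fun y _ => (hφ' y).hasDerivAt)
      (fun y _ => hψ y) (fun y _ => hψ' y) hode (fun _ _ => rfl)
  have hWs := wronskian (hasDerivAt_sinh_mul k) fun y =>
    ((hasDerivAt_cosh_mul k y).const_mul k).congr_deriv (by ring)
  have hWc := wronskian (hasDerivAt_cosh_mul k) fun y =>
    ((hasDerivAt_sinh_mul k y).const_mul k).congr_deriv (by ring)
  intro y hy
  specialize hWs y hy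
  specialize hWc y hy
  simp only [h0, mul_zero, sinh_zero, cosh_zero] at hWs hWc
  have hpy := cosh_sq_sub_sinh_sq (k * y)
  constructor
  · linear_combination sinh (k * y) * hWc - cosh (k * y) * hWs - k * φ y * hpy
  · linear_combination cosh (k * y) * hWc - sinh (k * y) * hWs - deriv φ y * hpy

theorem mul_cosh_eq_iff_dispersion {g k γ U c x : ℝ} (hUc : U ≠ c) :
    k * cosh x = (g / (U - c) ^ 2 + γ / (U - c)) * sinh x ↔
      k * (c - U) ^ 2 + γ * tanh x * (c - U) - g * tanh x = 0 := by
  have hUc' : U - c ≠ 0 := sub_ne_zero.2 hUc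
  have hcosh : cosh x ≠ 0 := (cosh_pos x).ne'
  rw [tanh_eq_sinh_div_cosh]
  field_simp
  constructor <;> intro h <;> linear_combination h

theorem dispersion_of_nontrivial_solution {g h₀ k γ c : ℝ} {φ : ℝ → ℝ} (hh₀ : 0 < h₀)
    (hk : k ≠ 0) (hc : ∀ y ∈ Icc 0 h₀, γ * y < c) (hφ : ContDiff ℝ 2 φ)
    (hode : ∀ y ∈ Ioo 0 h₀, (γ * y - c) * (deriv (deriv φ) y - k ^ 2 * φ y) = 0)
    (h0 : φ 0 = 0) (hbc : deriv φ h₀ = (g / (γ * h₀ - c) ^ 2 + γ / (γ * h₀ - c)) * φ h₀)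
    {y₀ : ℝ} (hy₀ : y₀ ∈ Icc 0 h₀) (hφy₀ : φ y₀ ≠ 0) :
    k * (c - γ * h₀) ^ 2 + γ * tanh (k * h₀) * (c - γ * h₀) - g * tanh (k * h₀) = 0 := by
  have hode_Ioo : EqOn (deriv (deriv φ)) (fun y => k ^ 2 * φ y) (Ioo 0 h₀) := fun y hy =>
    sub_eq_zero.1 <| (mul_eq_zero.1 (hode y hy)).resolve_left
      (sub_ne_zero.2 (hc y (Ioo_subset_Icc_self hy)).ne)
  have hode_Icc : EqOn (deriv (deriv φ)) (fun y => k ^ 2 * φ y) (Icc 0 h₀) := by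
    simpa only [closure_Ioo hh₀.ne] using hode_Ioo.closure
      (ContDiff.deriv' (n := 1) hφ).continuous_deriv_one (by fun_prop)
  have hsol := eq_sinh_of_deriv_deriv_eq (hφ.differentiable two_ne_zero)
    hφ.differentiable_deriv_two hode_Icc h0
  have hφ'0 : deriv φ 0 ≠ 0 := by
    intro h
    have := (hsol y₀ hy₀).1
    rw [h, zero_mul] at this
    exact hφy₀ ((mul_eq_zero.1 this).resolve_left hk)
  obtain ⟨hφh₀, hφ'h₀⟩ := hsol h₀ ⟨hh₀.le, le_rfl⟩
  refine (mul_cosh_eq_iff_dispersion (hc h₀ ⟨hh₀.le, le_rfl⟩).ne).1 (mul_left_cancel₀ hφ'0 ?_)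
  linear_combination k * hbc - k * hφ'h₀ + (g / (γ * h₀ - c) ^ 2 + γ / (γ * h₀ - c)) * hφh₀

theorem exists_nontrivial_solution_iff_dispersion {g h₀ k γ c : ℝ} (hh₀ : 0 < h₀) (hk : k ≠ 0)
    (hc : ∀ y ∈ Icc 0 h₀, γ * y < c) :
    (∃ φ : ℝ → ℝ, ContDiff ℝ 2 φ ∧
        (∀ y ∈ Ioo 0 h₀, (γ * y - c) * (deriv (deriv φ) y - k ^ 2 * φ y) = 0) ∧
        φ 0 = 0 ∧
        deriv φ h₀ = (g / (γ * h₀ - c) ^ 2 + γ / (γ * h₀ - c)) * φ h₀ ∧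
        ∃ y ∈ Icc 0 h₀, φ y ≠ 0) ↔
      k * (c - γ * h₀) ^ 2 + γ * tanh (k * h₀) * (c - γ * h₀) - g * tanh (k * h₀) = 0 := by
  constructor
  · rintro ⟨φ, hφ, hode, h0, hbc, y₀, hy₀, hφy₀⟩
    exact dispersion_of_nontrivial_solution hh₀ hk hc hφ hode h0 hbc hy₀ hφy₀
  · intro hdisp
    refine ⟨fun y => sinh (k * y), by fun_prop,
      fun y _ => by rw [deriv_deriv_sinh_mul, sub_self, mul_zero], by simp, ?_,
      h₀, ⟨hh₀.le, le_rfl⟩, sinh_eq_zero.not.2 (mul_ne_zero hk hh₀.ne')⟩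
    rw [deriv_sinh_mul]
    exact (mul_cosh_eq_iff_dispersion (hc h₀ ⟨hh₀.le, le_rfl⟩).ne).2 hdisp

theorem quadratic_eq_zero_iff_eq_neg_add_sqrt {a b c x : ℝ} (ha : 0 < a) (hc : 0 ≤ c)
    (hx : 0 < x) :
    a * x ^ 2 + b * x - c = 0 ↔ x = -b / (2 * a) + √(b ^ 2 / (4 * a ^ 2) + c / a) := by
  obtain ⟨r, hr_def⟩ : ∃ r, r = x + b / (2 * a) := ⟨_, rfl⟩
  have hcomplete : r * r - (b ^ 2 / (4 * a ^ 2) + c / a) = (a * x ^ 2 + b * x - c) / a := by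
    rw [hr_def]
    field_simp
    ring
  rw [show x = -b / (2 * a) + √(b ^ 2 / (4 * a ^ 2) + c / a) ↔
    √(b ^ 2 / (4 * a ^ 2) + c / a) = r by constructor <;> intro <;> linarith [neg_div (2 * a) b]]
  constructor
  · intro hq
    -- the root `x > 0` lies right of the vertex `-b / (2a)`, because `x (a x + b) = c ≥ 0`
    have hr : 0 < r := by
      have : 0 ≤ a * x + b := nonneg_of_mul_nonneg_right (by linarith) hx
      rw [hr_def, show x + b / (2 * a) = (a * x + (a * x + b)) / (2 * a) by field_simp; ring]
      positivity
    refine (sqrt_eq_iff_mul_self_eq_of_pos hr).2 (sub_eq_zero.1 ?_)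
    rw [hcomplete, hq, zero_div]
  · intro hr
    have : r * r - (b ^ 2 / (4 * a ^ 2) + c / a) = 0 := by
      rw [← hr, mul_self_sqrt (by positivity), sub_self]
    rwa [hcomplete, div_eq_zero_iff, or_iff_left ha.ne'] at this

/-- For the linear shear flow `U(y) = γy` with `c > max U`, the bifurcation
problem `(γy - c)(φ'' - k²φ) = 0` on `(0,h₀)`, `φ(0) = 0`,
`φ'(h₀) = (g/(γh₀-c)² + γ/(γh₀-c))·φ(h₀)` admits a nontrivial solution iff the
constant-vorticity dispersion relation holds (in either of its two equivalent forms). -/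
theorem stmt1 (g h₀ k γ c : ℝ) (hg : 0 < g) (hh₀ : 0 < h₀) (hk : 0 < k)
    (hc : ∀ y ∈ Set.Icc (0 : ℝ) h₀, γ * y < c) :
    ((∃ φ : ℝ → ℝ, ContDiff ℝ 2 φ ∧
        (∀ y ∈ Set.Ioo (0 : ℝ) h₀, (γ * y - c) * (deriv (deriv φ) y - k ^ 2 * φ y) = 0) ∧
        φ 0 = 0 ∧
        deriv φ h₀ = (g / (γ * h₀ - c) ^ 2 + γ / (γ * h₀ - c)) * φ h₀ ∧
        ∃ y ∈ Set.Icc (0 : ℝ) h₀, φ y ≠ 0) ↔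
      c - γ * h₀ = -(γ * Real.tanh (k * h₀)) / (2 * k) +
        Real.sqrt (γ ^ 2 * Real.tanh (k * h₀) ^ 2 / (4 * k ^ 2)
          + g * Real.tanh (k * h₀) / k)) ∧
    ((∃ φ : ℝ → ℝ, ContDiff ℝ 2 φ ∧
        (∀ y ∈ Set.Ioo (0 : ℝ) h₀, (γ * y - c) * (deriv (deriv φ) y - k ^ 2 * φ y) = 0) ∧
        φ 0 = 0 ∧
        deriv φ h₀ = (g / (γ * h₀ - c) ^ 2 + γ / (γ * h₀ - c)) * φ h₀ ∧
        ∃ y ∈ Set.Icc (0 : ℝ) h₀, φ y ≠ 0) ↔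
      k * (c - γ * h₀) ^ 2 + γ * Real.tanh (k * h₀) * (c - γ * h₀)
        - g * Real.tanh (k * h₀) = 0) := by
  have htanh : 0 ≤ tanh (k * h₀) := by
    rw [tanh_eq_sinh_div_cosh]
    exact div_nonneg (sinh_nonneg_iff.2 (mul_pos hk hh₀).le) (cosh_pos _).le
  have hdisp := exists_nontrivial_solution_iff_dispersion hh₀ hk.ne' hc (g := g)
  refine ⟨hdisp.trans ?_, hdisp⟩
  rw [quadratic_eq_zero_iff_eq_neg_add_sqrt hk (mul_nonneg hg.le htanh)
    (sub_pos.2 (hc h₀ ⟨hh₀.le, le_rfl⟩)), mul_pow]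
end

section
/- Let U ∈ C²([0,h₀]), c ∈ ℝ, φ ∈ C³([0,h₀]), and set u₁(x,y) = φ'(y)cos x, v₁(x,y) = φ(y)sin x. Suppose u₂, v₂, p₂ : ℝ × [0,h₀] → ℝ are C² (with p₂ having continuous mixed second partials) and satisfy the second-order system: (U−c)∂ₓu₂ + U'v₂ + u₁∂ₓu₁ + v₁∂_y u₁ = −∂ₓp₂, (U−c)∂ₓv₂ + u₁∂ₓv₁ + v₁∂_y v₁ = −∂_y p₂, and ∂ₓu₂ + ∂_y v₂ = 0 in ℝ × (0,h₀). Then v₂ satisfies the inhomogeneous Rayleigh PDE (U−c)(∂ₓₓv₂ + ∂_{yy}v₂) − U''v₂ = (1/2)(φφ''' − φ'φ'')(y)·sin(2x) in ℝ × (0,h₀). -/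
/-- Partial derivative in the first (horizontal) variable. -/
noncomputable def pdX (f : ℝ → ℝ → ℝ) : ℝ → ℝ → ℝ := fun x y => deriv (fun t => f t y) x

/-- Partial derivative in the second (vertical) variable. -/
noncomputable def pdY (f : ℝ → ℝ → ℝ) : ℝ → ℝ → ℝ := fun x y => deriv (fun t => f x t) y

/-!
Differentiate the horizontal momentum equation in `y` and the vertical one in `x` and subtract:
the pressure drops out by symmetry of its mixed partials, and the continuity equation
`∂ₓu₂ = -∂_y v₂` eliminates `u₂`. What remains is the Rayleigh operator applied to `v₂`, forced
by the curl of the first-order advection `(u₁·∇)(u₁, v₁)`. The horizontal advection equals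
`(φφ'' - φ'²) sin x cos x`, whose `y`-derivative is `(φφ''' - φ'φ'') sin x cos x`, while the
vertical advection `φφ'` does not depend on `x`.
-/

open Function Filter Topology Set Real

section PartialDerivatives

variable {E : Type*} [NormedAddCommGroup E] [NormedSpace ℝ E]

theorem DifferentiableAt.hasDerivAt_horizontal {g : ℝ × ℝ → E} {x y : ℝ}
    (hg : DifferentiableAt ℝ g (x, y)) :
    HasDerivAt (fun t => g (t, y)) (fderiv ℝ g (x, y) (1, 0)) x :=
  hg.hasFDerivAt.comp_hasDerivAt x ((hasDerivAt_id x).prodMk (hasDerivAt_const x y))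

theorem DifferentiableAt.hasDerivAt_vertical {g : ℝ × ℝ → E} {x y : ℝ}
    (hg : DifferentiableAt ℝ g (x, y)) :
    HasDerivAt (fun t => g (x, t)) (fderiv ℝ g (x, y) (0, 1)) y :=
  hg.hasFDerivAt.comp_hasDerivAt y ((hasDerivAt_const y x).prodMk (hasDerivAt_id y))

variable {f : ℝ → ℝ → ℝ} {x y : ℝ}

theorem pdX_eq_fderiv (hf : DifferentiableAt ℝ (uncurry f) (x, y)) :
    pdX f x y = fderiv ℝ (uncurry f) (x, y) (1, 0) :=
  hf.hasDerivAt_horizontal.deriv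

theorem pdY_eq_fderiv (hf : DifferentiableAt ℝ (uncurry f) (x, y)) :
    pdY f x y = fderiv ℝ (uncurry f) (x, y) (0, 1) :=
  hf.hasDerivAt_vertical.deriv

theorem hasDerivAt_pdX (hf : DifferentiableAt ℝ (uncurry f) (x, y)) :
    HasDerivAt (fun t => f t y) (pdX f x y) x :=
  pdX_eq_fderiv hf ▸ hf.hasDerivAt_horizontal

theorem hasDerivAt_pdY (hf : DifferentiableAt ℝ (uncurry f) (x, y)) :
    HasDerivAt (fun t => f x t) (pdY f x y) y :=
  pdY_eq_fderiv hf ▸ hf.hasDerivAt_vertical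

theorem uncurry_pdX (hf : Differentiable ℝ (uncurry f)) :
    uncurry (pdX f) = fun p => fderiv ℝ (uncurry f) p (1, 0) :=
  funext fun p => pdX_eq_fderiv (hf p)

theorem uncurry_pdY (hf : Differentiable ℝ (uncurry f)) :
    uncurry (pdY f) = fun p => fderiv ℝ (uncurry f) p (0, 1) :=
  funext fun p => pdY_eq_fderiv (hf p)

theorem contDiff_pdX {n : WithTop ℕ∞} (hf : ContDiff ℝ (n + 1) (uncurry f)) :
    ContDiff ℝ n (uncurry (pdX f)) := by
  rw [uncurry_pdX (hf.differentiable (by simp))]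
  exact (hf.fderiv_right le_rfl).clm_apply contDiff_const

theorem contDiff_pdY {n : WithTop ℕ∞} (hf : ContDiff ℝ (n + 1) (uncurry f)) :
    ContDiff ℝ n (uncurry (pdY f)) := by
  rw [uncurry_pdY (hf.differentiable (by simp))]
  exact (hf.fderiv_right le_rfl).clm_apply contDiff_const

theorem fderiv_fderiv_apply_const {F : Type*} [NormedAddCommGroup F] [NormedSpace ℝ F]
    {g : E → F} {p : E} (hg : DifferentiableAt ℝ (fderiv ℝ g) p) (v w : E) :
    fderiv ℝ (fun q => fderiv ℝ g q w) p v = fderiv ℝ (fderiv ℝ g) p v w := by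
  rw [fderiv_clm_apply hg (differentiableAt_const w)]
  simp

theorem pdY_pdX_comm (hf : ContDiff ℝ 2 (uncurry f)) (x y : ℝ) :
    pdY (pdX f) x y = pdX (pdY f) x y := by
  have hf₁ : Differentiable ℝ (uncurry f) := hf.differentiable two_ne_zero
  have hf₂ : DifferentiableAt ℝ (fderiv ℝ (uncurry f)) (x, y) :=
    (hf.fderiv_right (m := 1) le_rfl).differentiable one_ne_zero _
  rw [pdY_eq_fderiv ((contDiff_pdX hf).differentiable one_ne_zero _),
    pdX_eq_fderiv ((contDiff_pdY hf).differentiable one_ne_zero _), uncurry_pdX hf₁,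
    uncurry_pdY hf₁, fderiv_fderiv_apply_const hf₂, fderiv_fderiv_apply_const hf₂]
  exact (hf.contDiffAt.isSymmSndFDerivAt (by simp)) _ _

end PartialDerivatives

theorem ContDiffAt.differentiableAt_deriv {f : ℝ → ℝ} {n : WithTop ℕ∞} {y : ℝ}
    (hf : ContDiffAt ℝ n f y) (hn : 2 ≤ n) : DifferentiableAt ℝ (deriv f) y :=
  (hf.derivWithin (m := 1) hn).differentiableAt one_ne_zero

theorem ContDiffAt.hasDerivAt_mul_deriv_deriv_sub_deriv_mul_deriv {φ : ℝ → ℝ} {y : ℝ}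
    (hφ : ContDiffAt ℝ 3 φ y) :
    HasDerivAt (fun t => φ t * deriv (deriv φ) t - deriv φ t * deriv φ t)
      (φ y * deriv (deriv (deriv φ)) y - deriv φ y * deriv (deriv φ) y) y := by
  have hφ' : ContDiffAt ℝ 2 (deriv φ) y := hφ.derivWithin (by norm_num)
  have hφ'' := (hφ'.differentiableAt_deriv le_rfl).hasDerivAt
  have hφ' := (hφ'.differentiableAt two_ne_zero).hasDerivAt
  refine ((hφ.differentiableAt three_ne_zero).hasDerivAt.mul hφ'').sub (hφ'.mul hφ')
    |>.congr_deriv ?_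
  ring

section Advection

variable {φ : ℝ → ℝ} {x y : ℝ}

theorem horizontal_advection (hφ : DifferentiableAt ℝ (deriv φ) y) :
    deriv φ y * cos x * pdX (fun x y => deriv φ y * cos x) x y
      + φ y * sin x * pdY (fun x y => deriv φ y * cos x) x y
      = (φ y * deriv (deriv φ) y - deriv φ y * deriv φ y) * (sin x * cos x) := by
  simp only [pdX, pdY, deriv_const_mul_field', Real.deriv_cos', deriv_mul_const hφ]
  ring

theorem vertical_advection (hφ : DifferentiableAt ℝ φ y) :
    deriv φ y * cos x * pdX (fun x y => φ y * sin x) x y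
      + φ y * sin x * pdY (fun x y => φ y * sin x) x y = φ y * deriv φ y := by
  simp only [pdX, pdY, deriv_const_mul_field', Real.deriv_sin, deriv_mul_const hφ]
  linear_combination φ y * deriv φ y * sin_sq_add_cos_sq x

end Advection

theorem rayleigh_of_forced_momentum {U F G : ℝ → ℝ} {u₂ v₂ p₂ : ℝ → ℝ → ℝ} {c x y : ℝ}
    (hU : DifferentiableAt ℝ U y) (hU' : DifferentiableAt ℝ (deriv U) y)
    (hv₂ : ContDiff ℝ 2 (uncurry v₂)) (hp₂ : ContDiff ℝ 2 (uncurry p₂))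
    (hF : DifferentiableAt ℝ F y) (hG : DifferentiableAt ℝ G x)
    (hmomX : ∀ᶠ t in 𝓝 y,
      (U t - c) * pdX u₂ x t + deriv U t * v₂ x t + F t = -pdX p₂ x t)
    (hmomY : ∀ᶠ s in 𝓝 x, (U y - c) * pdX v₂ s y + G s = -pdY p₂ s y)
    (hdiv : ∀ᶠ t in 𝓝 y, pdX u₂ x t + pdY v₂ x t = 0) :
    (U y - c) * (pdX (pdX v₂) x y + pdY (pdY v₂) x y) - deriv (deriv U) y * v₂ x y
      = deriv F y - deriv G x := by
  have hv₂Y : Differentiable ℝ (uncurry (pdY v₂)) := (contDiff_pdY hv₂).differentiable one_ne_zero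
  have hv₂X : Differentiable ℝ (uncurry (pdX v₂)) := (contDiff_pdX hv₂).differentiable one_ne_zero
  have hmomX_y : -(deriv U y * pdY v₂ x y + (U y - c) * pdY (pdY v₂) x y)
      + (deriv (deriv U) y * v₂ x y + deriv U y * pdY v₂ x y) + deriv F y
      = -pdY (pdX p₂) x y := by
    have hd := (((hU.hasDerivAt.sub_const c).mul (hasDerivAt_pdY (hv₂Y (x, y)))).neg.add
      (hU'.hasDerivAt.mul (hasDerivAt_pdY ((hv₂.differentiable two_ne_zero) (x, y))))).add
      hF.hasDerivAt
    refine hd.unique ((hasDerivAt_pdY ((contDiff_pdX hp₂).differentiable one_ne_zero _)).neg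
      |>.congr_of_eventuallyEq ?_)
    filter_upwards [hmomX, hdiv] with t hmomX hdiv
    simp only [Pi.add_apply, Pi.neg_apply, Pi.mul_apply]
    linear_combination hmomX - (U t - c) * hdiv
  have hmomY_x : (U y - c) * pdX (pdX v₂) x y + deriv G x = -pdX (pdY p₂) x y := by
    have hd := ((hasDerivAt_pdX (hv₂X (x, y))).const_mul (U y - c)).add hG.hasDerivAt
    refine hd.unique ((hasDerivAt_pdX ((contDiff_pdY hp₂).differentiable one_ne_zero _)).neg
      |>.congr_of_eventuallyEq ?_)
    filter_upwards [hmomY] with s hmomY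
    simp only [Pi.add_apply, Pi.neg_apply]
    linear_combination hmomY
  linear_combination hmomY_x - hmomX_y + pdY_pdX_comm hp₂ x y

theorem stmt6_general (h₀ c : ℝ) (U : ℝ → ℝ)
    (hU : ContDiffOn ℝ 2 U (Set.Icc 0 h₀))
    (φ : ℝ → ℝ) (hφ : ContDiffOn ℝ 3 φ (Set.Icc 0 h₀))
    (u₁ v₁ : ℝ → ℝ → ℝ)
    (hu₁ : u₁ = fun x y => deriv φ y * Real.cos x)
    (hv₁ : v₁ = fun x y => φ y * Real.sin x)
    (u₂ v₂ p₂ : ℝ → ℝ → ℝ)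
    (hv₂ : ContDiff ℝ 2 (Function.uncurry v₂))
    (hp₂ : ContDiff ℝ 2 (Function.uncurry p₂))
    (e₁ : ∀ x : ℝ, ∀ y ∈ Set.Ioo (0 : ℝ) h₀,
      (U y - c) * pdX u₂ x y + deriv U y * v₂ x y
        + u₁ x y * pdX u₁ x y + v₁ x y * pdY u₁ x y = -(pdX p₂ x y))
    (e₂ : ∀ x : ℝ, ∀ y ∈ Set.Ioo (0 : ℝ) h₀,
      (U y - c) * pdX v₂ x y + u₁ x y * pdX v₁ x y + v₁ x y * pdY v₁ x y = -(pdY p₂ x y))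
    (e₃ : ∀ x : ℝ, ∀ y ∈ Set.Ioo (0 : ℝ) h₀,
      pdX u₂ x y + pdY v₂ x y = 0) :
    ∀ x : ℝ, ∀ y ∈ Set.Ioo (0 : ℝ) h₀,
      (U y - c) * (pdX (pdX v₂) x y + pdY (pdY v₂) x y) - deriv (deriv U) y * v₂ x y
        = (1 / 2) * (φ y * deriv (deriv (deriv φ)) y - deriv φ y * deriv (deriv φ) y)
            * Real.sin (2 * x) := by
  subst hu₁ hv₁
  intro x y hy
  have hstrip : Ioo 0 h₀ ∈ 𝓝 y := isOpen_Ioo.mem_nhds hy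
  have hφ₃ : ∀ t ∈ Ioo 0 h₀, ContDiffAt ℝ 3 φ t := fun t ht =>
    hφ.contDiffAt (Icc_mem_nhds ht.1 ht.2)
  have hU₂ : ContDiffAt ℝ 2 U y := hU.contDiffAt (Icc_mem_nhds hy.1 hy.2)
  have hF := (hφ₃ y hy).hasDerivAt_mul_deriv_deriv_sub_deriv_mul_deriv.mul_const (sin x * cos x)
  have key := rayleigh_of_forced_momentum (c := c) (x := x) (u₂ := u₂)
    (G := fun _ => φ y * deriv φ y) (hU₂.differentiableAt two_ne_zero)
    (hU₂.differentiableAt_deriv le_rfl) hv₂ hp₂ hF.differentiableAt (differentiableAt_const _)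
    (by
      filter_upwards [hstrip] with t ht
      linear_combination e₁ x t ht
        - horizontal_advection ((hφ₃ t ht).differentiableAt_deriv (by norm_num)))
    (.of_forall fun s => by
      linear_combination e₂ s y hy - vertical_advection ((hφ₃ y hy).differentiableAt three_ne_zero))
    (by filter_upwards [hstrip] with t ht using e₃ x t ht)
  rw [key, hF.deriv, deriv_const, sin_two_mul]
  ring

/-- If `(u₂, v₂, p₂)` is a C² solution of the second-order Euler system about
the shear flow `(U(y),0)`, with first-order fields `u₁ = φ'(y)cos x`, `v₁ = φ(y)sin x`,
then `v₂` satisfies the inhomogeneous Rayleigh PDE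
`(U-c)Δv₂ - U''v₂ = (1/2)(φφ''' - φ'φ'')·sin 2x` in the strip. -/
theorem stmt6 (h₀ c : ℝ) (hh₀ : 0 < h₀) (U : ℝ → ℝ)
    (hU : ContDiffOn ℝ 2 U (Set.Icc 0 h₀))
    (φ : ℝ → ℝ) (hφ : ContDiffOn ℝ 3 φ (Set.Icc 0 h₀))
    (u₁ v₁ : ℝ → ℝ → ℝ)
    (hu₁ : u₁ = fun x y => deriv φ y * Real.cos x)
    (hv₁ : v₁ = fun x y => φ y * Real.sin x)
    (u₂ v₂ p₂ : ℝ → ℝ → ℝ)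
    (hu₂ : ContDiff ℝ 2 (Function.uncurry u₂))
    (hv₂ : ContDiff ℝ 2 (Function.uncurry v₂))
    (hp₂ : ContDiff ℝ 2 (Function.uncurry p₂))
    (e₁ : ∀ x : ℝ, ∀ y ∈ Set.Ioo (0 : ℝ) h₀,
      (U y - c) * pdX u₂ x y + deriv U y * v₂ x y
        + u₁ x y * pdX u₁ x y + v₁ x y * pdY u₁ x y = -(pdX p₂ x y))
    (e₂ : ∀ x : ℝ, ∀ y ∈ Set.Ioo (0 : ℝ) h₀,
      (U y - c) * pdX v₂ x y + u₁ x y * pdX v₁ x y + v₁ x y * pdY v₁ x y = -(pdY p₂ x y))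
    (e₃ : ∀ x : ℝ, ∀ y ∈ Set.Ioo (0 : ℝ) h₀,
      pdX u₂ x y + pdY v₂ x y = 0) :
    ∀ x : ℝ, ∀ y ∈ Set.Ioo (0 : ℝ) h₀,
      (U y - c) * (pdX (pdX v₂) x y + pdY (pdY v₂) x y) - deriv (deriv U) y * v₂ x y
        = (1 / 2) * (φ y * deriv (deriv (deriv φ)) y - deriv φ y * deriv (deriv φ) y)
            * Real.sin (2 * x) :=
  stmt6_general h₀ c U hU φ hφ u₁ v₁ hu₁ hv₁ u₂ v₂ p₂ hv₂ hp₂ e₁ e₂ e₃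
end

section
/- Let g, h₀ > 0, c ≠ 0, b ∈ ℝ, φ(y) = (b/c)·sinh(y), and ψ(y) = −(b²/(8c³))·sinh(2y). Then the second-order reconstruction formula for zero vorticity evaluates to: −(1/2)φ(h₀)² + (1/4)(φφ'' − (φ')²)(h₀)·cos(2x) + (−c)ψ'(h₀)·cos(2x) = (1/2)(b/c)²·sinh²(h₀)·(−1 + cos(2x)) for all x ∈ ℝ. -/
/-! The Rayleigh profile `a sinh` has `φ φ'' - φ'² = -a²` because `cosh² - sinh² = 1`, while
`-c ψ'(h₀) = (b/c)² cosh (2h₀) / 4`; with `cosh (2h₀) = 1 + 2 sinh² h₀` the constant parts of the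
`cos 2x` coefficient cancel. -/

open Real

theorem deriv_const_mul_sinh (a : ℝ) : deriv (fun y => a * sinh y) = fun y => a * cosh y :=
  funext fun y => ((hasDerivAt_sinh y).const_mul a).deriv

theorem deriv_const_mul_cosh (a : ℝ) : deriv (fun y => a * cosh y) = fun y => a * sinh y :=
  funext fun y => ((hasDerivAt_cosh y).const_mul a).deriv

theorem deriv_const_mul_sinh_two_mul (a y : ℝ) :
    deriv (fun y => a * sinh (2 * y)) y = 2 * a * cosh (2 * y) := by
  have h := (((hasDerivAt_id y).const_mul 2).sinh).const_mul a
  simp only [id, mul_one] at h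
  rw [h.deriv]
  ring

theorem stmt9_general (h₀ b c : ℝ) (hc : c ≠ 0)
    (φ ψ : ℝ → ℝ)
    (hφdef : φ = fun y => (b / c) * Real.sinh y)
    (hψdef : ψ = fun y => -(b ^ 2 / (8 * c ^ 3)) * Real.sinh (2 * y)) :
    ∀ x : ℝ,
      -(1 / 2) * (φ h₀) ^ 2
        + (1 / 4) * (φ h₀ * deriv (deriv φ) h₀ - (deriv φ h₀) ^ 2) * Real.cos (2 * x)
        + (-c) * deriv ψ h₀ * Real.cos (2 * x)
      = (1 / 2) * (b / c) ^ 2 * (Real.sinh h₀) ^ 2 * (-1 + Real.cos (2 * x)) := by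
  intro x
  subst hφdef hψdef
  rw [deriv_const_mul_sinh, deriv_const_mul_cosh, deriv_const_mul_sinh_two_mul,
    cosh_two_mul, cosh_sq']
  field_simp
  linear_combination (-16 * b ^ 2 * cos (2 * x)) * cosh_sq' h₀

/-- With `φ(y) = (b/c)sinh y` and `ψ(y) = -(b²/(8c³))sinh 2y`, the
second-order reconstruction formula for zero vorticity evaluates to
`(1/2)(b/c)²·sinh²(h₀)·(-1 + cos 2x)`. -/
theorem stmt9 (g h₀ b c : ℝ) (hg : 0 < g) (hh₀ : 0 < h₀) (hc : c ≠ 0)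
    (φ ψ : ℝ → ℝ)
    (hφdef : φ = fun y => (b / c) * Real.sinh y)
    (hψdef : ψ = fun y => -(b ^ 2 / (8 * c ^ 3)) * Real.sinh (2 * y)) :
    ∀ x : ℝ,
      -(1 / 2) * (φ h₀) ^ 2
        + (1 / 4) * (φ h₀ * deriv (deriv φ) h₀ - (deriv φ h₀) ^ 2) * Real.cos (2 * x)
        + (-c) * deriv ψ h₀ * Real.cos (2 * x)
      = (1 / 2) * (b / c) ^ 2 * (Real.sinh h₀) ^ 2 * (-1 + Real.cos (2 * x)) :=
  stmt9_general h₀ b c hc φ ψ hφdef hψdef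
end

section
/- Let g, h₀ > 0, γ ∈ ℝ, c with c − γy ≠ 0 for all y ∈ [0,h₀] and c ≠ 0, and b ∈ ℝ. For the shear flow U(y) = γy: (i) the unique C² solution of (γy−c)(φ''−φ) = 0 on (0,h₀), φ(0)=0, φ'(0) = b/c, is φ(y) = (b/c)·sinh(y); and (ii) the first-order reconstruction formula gives g·η₁(x) = ((c−γh₀)/c·cosh(h₀) + (γ/c)·sinh(h₀))·b·cos(x). -/
/-!
Since `d²/dy² - 1 = (d/dy - 1)(d/dy + 1)`, a solution `ψ` of `ψ'' = ψ` satisfies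
`(e^{-y} (ψ' + ψ))' = e^{-y} (ψ'' - ψ) = 0` and then `(e^y ψ)' = e^y (ψ' + ψ)`. With zero
Cauchy data both integrating factors give `ψ = 0`, which is uniqueness; existence and the
reconstruction formula are direct computations with `sinh' = cosh`, `cosh' = sinh`.
-/

open Real Set

lemma eq_left_of_hasDerivAt_zero_Ioo {f : ℝ → ℝ} {a b : ℝ} (hf : ContinuousOn f (Icc a b))
    (hf' : ∀ x ∈ Ioo a b, HasDerivAt f 0 x) : ∀ x ∈ Icc a b, f x = f a := by
  intro x hx
  rcases hx.1.eq_or_lt with rfl | hax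
  · rfl
  obtain ⟨_, _, hslope⟩ := exists_hasDerivAt_eq_slope f (fun _ => 0) hax
    (hf.mono (Icc_subset_Icc_right hx.2)) fun y hy => hf' y ⟨hy.1, hy.2.trans_le hx.2⟩
  rw [eq_comm, div_eq_zero_iff, sub_eq_zero] at hslope
  exact hslope.resolve_right (sub_ne_zero.2 hax.ne')

lemma eq_zero_of_hasDerivAt_deriv_eq_self {ψ ψ' : ℝ → ℝ} {a b : ℝ}
    (hψ : ∀ y ∈ Icc a b, HasDerivAt ψ (ψ' y) y) (hψ'c : ContinuousOn ψ' (Icc a b))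
    (hψ' : ∀ y ∈ Ioo a b, HasDerivAt ψ' (ψ y) y) (ha : ψ a = 0) (ha' : ψ' a = 0) :
    ∀ y ∈ Icc a b, ψ y = 0 := by
  have hψc : ContinuousOn ψ (Icc a b) := fun y hy => (hψ y hy).continuousAt.continuousWithinAt
  have hsum : ∀ y ∈ Icc a b, ψ' y + ψ y = 0 := by
    have hconst := eq_left_of_hasDerivAt_zero_Ioo (f := fun y => exp (-y) * (ψ' y + ψ y))
      ((continuous_exp.comp continuous_neg).continuousOn.mul (hψ'c.add hψc)) fun y hy => by
        refine (((hasDerivAt_neg y).exp).mul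
          ((hψ' y hy).add (hψ y (Ioo_subset_Icc_self hy)))).congr_deriv ?_
        rw [Pi.add_apply]
        ring
    intro y hy
    have := hconst y hy
    rw [ha, ha', add_zero, mul_zero] at this
    exact (mul_eq_zero.1 this).resolve_left (exp_ne_zero _)
  have hconst := eq_left_of_hasDerivAt_zero_Ioo (f := fun y => exp y * ψ y)
    (continuous_exp.continuousOn.mul hψc) fun y hy => by
      refine ((hasDerivAt_exp y).mul (hψ y (Ioo_subset_Icc_self hy))).congr_deriv ?_
      rw [← mul_add, add_comm, hsum y (Ioo_subset_Icc_self hy), mul_zero]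
  intro y hy
  have := hconst y hy
  rw [ha, mul_zero] at this
  exact (mul_eq_zero.1 this).resolve_left (exp_ne_zero _)

lemma eq_mul_sinh_of_deriv_deriv_eq_self {φ : ℝ → ℝ} {k h : ℝ} (hφ : ContDiff ℝ 2 φ)
    (hφ'' : ∀ y ∈ Ioo 0 h, deriv (deriv φ) y = φ y) (h0 : φ 0 = 0) (h0' : deriv φ 0 = k) :
    ∀ y ∈ Icc 0 h, φ y = k * sinh y := by
  have hφd : Differentiable ℝ φ := hφ.differentiable two_ne_zero
  have hφ'd : Differentiable ℝ (deriv φ) := hφ.differentiable_deriv_two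
  have hzero := eq_zero_of_hasDerivAt_deriv_eq_self (ψ := fun y => φ y - k * sinh y)
    (ψ' := fun y => deriv φ y - k * cosh y) (a := 0) (b := h)
    (fun y _ => (hφd y).hasDerivAt.sub ((hasDerivAt_sinh y).const_mul k))
    (hφ'd.continuous.sub (continuous_const.mul continuous_cosh)).continuousOn
    (fun y hy => by
      refine ((hφ'd y).hasDerivAt.sub ((hasDerivAt_cosh y).const_mul k)).congr_deriv ?_
      rw [hφ'' y hy])
    (by simp [h0]) (by simp [h0'])
  exact fun y hy => sub_eq_zero.1 (hzero y hy)

theorem stmt10_general (h₀ γ c b : ℝ)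
    (hcγ : ∀ y ∈ Set.Icc (0 : ℝ) h₀, c - γ * y ≠ 0) :
    ((fun y : ℝ => (b / c) * Real.sinh y) 0 = 0 ∧
      deriv (fun y : ℝ => (b / c) * Real.sinh y) 0 = b / c ∧
      (∀ y ∈ Set.Ioo (0 : ℝ) h₀,
        (γ * y - c) * (deriv (deriv (fun y : ℝ => (b / c) * Real.sinh y)) y
          - (b / c) * Real.sinh y) = 0)) ∧
    (∀ φ : ℝ → ℝ, ContDiff ℝ 2 φ →
      (∀ y ∈ Set.Ioo (0 : ℝ) h₀, (γ * y - c) * (deriv (deriv φ) y - φ y) = 0) →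
      φ 0 = 0 → deriv φ 0 = b / c →
      ∀ y ∈ Set.Icc (0 : ℝ) h₀, φ y = (b / c) * Real.sinh y) ∧
    (∀ x : ℝ,
      ((c - γ * h₀) * deriv (fun y : ℝ => (b / c) * Real.sinh y) h₀
          + γ * ((b / c) * Real.sinh h₀)) * Real.cos x
        = ((c - γ * h₀) / c * Real.cosh h₀ + (γ / c) * Real.sinh h₀) * b * Real.cos x) := by
  have hderiv : deriv (fun y => b / c * sinh y) = fun y => b / c * cosh y :=
    funext fun y => ((hasDerivAt_sinh y).const_mul _).deriv
  refine ⟨⟨by simp, by simp, fun y _ => by simp⟩, ?_, fun x => ?_⟩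
  · intro φ hφ hrayleigh h0 h0'
    refine eq_mul_sinh_of_deriv_deriv_eq_self hφ (fun y hy => ?_) h0 h0'
    have hne : γ * y - c ≠ 0 := by
      rw [← neg_sub]
      exact neg_ne_zero.2 (hcγ y (Ioo_subset_Icc_self hy))
    exact sub_eq_zero.1 ((mul_eq_zero.1 (hrayleigh y hy)).resolve_left hne)
  · rw [hderiv]
    ring

/-- For the linear shear flow `U(y) = γy` with `c - γy ≠ 0` on `[0,h₀]` and
`c ≠ 0`: (i) the unique C² solution of `(γy - c)(φ'' - φ) = 0` on `(0,h₀)`, `φ(0) = 0`,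
`φ'(0) = b/c`, is `φ(y) = (b/c)sinh y`; (ii) the first-order reconstruction formula gives
`g·η₁(x) = ((c-γh₀)/c·cosh h₀ + (γ/c)·sinh h₀)·b·cos x`. -/
theorem stmt10 (g h₀ γ c b : ℝ) (hg : 0 < g) (hh₀ : 0 < h₀)
    (hcγ : ∀ y ∈ Set.Icc (0 : ℝ) h₀, c - γ * y ≠ 0) (hc : c ≠ 0) :
    ((fun y : ℝ => (b / c) * Real.sinh y) 0 = 0 ∧
      deriv (fun y : ℝ => (b / c) * Real.sinh y) 0 = b / c ∧
      (∀ y ∈ Set.Ioo (0 : ℝ) h₀,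
        (γ * y - c) * (deriv (deriv (fun y : ℝ => (b / c) * Real.sinh y)) y
          - (b / c) * Real.sinh y) = 0)) ∧
    (∀ φ : ℝ → ℝ, ContDiff ℝ 2 φ →
      (∀ y ∈ Set.Ioo (0 : ℝ) h₀, (γ * y - c) * (deriv (deriv φ) y - φ y) = 0) →
      φ 0 = 0 → deriv φ 0 = b / c →
      ∀ y ∈ Set.Icc (0 : ℝ) h₀, φ y = (b / c) * Real.sinh y) ∧
    (∀ x : ℝ,
      ((c - γ * h₀) * deriv (fun y : ℝ => (b / c) * Real.sinh y) h₀
          + γ * ((b / c) * Real.sinh h₀)) * Real.cos x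
        = ((c - γ * h₀) / c * Real.cosh h₀ + (γ / c) * Real.sinh h₀) * b * Real.cos x) :=
  stmt10_general h₀ γ c b hcγ
end

section
/- Let g > 0, h₀ > 0, U ∈ C¹([0,h₀]) with c > max_{[0,h₀]} U, let b₁ ∈ C¹(ℝ), and define fr(y) = ∫₀^y dz/(U(z)−c)². Set u₁(x,y) = −b₁(x)·(U'(y)fr(y) + 1/(U(y)−c)), v₁(x,y) = b₁'(x)·(U(y)−c)·fr(y), p₁(x,y) = b₁(x). Then: (i) (U−c)∂ₓu₁ + U'v₁ = −∂ₓp₁, (ii) ∂_y p₁ = 0, (iii) ∂ₓu₁ + ∂_y v₁ = 0 in ℝ × (0,h₀); (iv) v₁(x,0) = 0; and (v) if in addition c satisfies the Burns condition ∫₀^{h₀} dy/(U(y)−c)² = 1/g and η₁ = b₁/g, then the kinematic surface condition v₁(x,h₀) = (U(h₀)−c)·η₁'(x) holds for all x. -/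
open Set

lemma pdX_mul (a k : ℝ → ℝ) (x y : ℝ) :
    pdX (fun x y => a x * k y) x y = deriv a x * k y :=
  deriv_mul_const_field (k y)

lemma pdY_mul (a k : ℝ → ℝ) (x y : ℝ) :
    pdY (fun x y => a x * k y) x y = a x * deriv k y :=
  deriv_const_mul_field (a x)

lemma pdX_apply_left (a : ℝ → ℝ) (x y : ℝ) : pdX (fun x _ => a x) x y = deriv a x :=
  rfl

lemma pdY_apply_left (a : ℝ → ℝ) (x y : ℝ) : pdY (fun x _ => a x) x y = 0 :=
  deriv_const y (a x)

lemma hasDerivAt_integral_of_continuousOn_Icc {f : ℝ → ℝ} {a b y : ℝ}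
    (hf : ContinuousOn f (Icc a b)) (hy : y ∈ Ioo a b) :
    HasDerivAt (fun t => ∫ z in a..t, f z) (f y) y := by
  have hnhds : Icc a b ∈ nhds y := Icc_mem_nhds hy.1 hy.2
  refine intervalIntegral.integral_hasDerivAt_right ?_
    ⟨Icc a b, hnhds, hf.aestronglyMeasurable measurableSet_Icc⟩
    ((hf y (Ioo_subset_Icc_self hy)).continuousAt hnhds)
  refine (hf.mono ?_).intervalIntegrable
  rw [uIcc_of_le hy.1.le]
  exact Icc_subset_Icc le_rfl hy.2.le

lemma hasDerivAt_sub_mul_of_hasDerivAt_inv_sq {U fr : ℝ → ℝ} {c y : ℝ}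
    (hU : DifferentiableAt ℝ U y) (hfr : HasDerivAt fr (1 / (U y - c) ^ 2) y)
    (hne : U y - c ≠ 0) :
    HasDerivAt (fun t => (U t - c) * fr t) (deriv U y * fr y + 1 / (U y - c)) y := by
  refine ((hU.hasDerivAt.sub_const c).mul hfr).congr_deriv ?_
  field_simp

theorem stmt13_general (g h₀ c : ℝ)
    (U : ℝ → ℝ) (hU : ContDiffOn ℝ 1 U (Set.Icc 0 h₀))
    (hc : ∀ y ∈ Set.Icc (0 : ℝ) h₀, U y < c)
    (b₁ : ℝ → ℝ)
    (fr : ℝ → ℝ) (hfr : fr = fun y => ∫ z in (0 : ℝ)..y, 1 / (U z - c) ^ 2)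
    (u₁ v₁ p₁ : ℝ → ℝ → ℝ)
    (hu₁ : u₁ = fun x y => -(b₁ x) * (deriv U y * fr y + 1 / (U y - c)))
    (hv₁ : v₁ = fun x y => deriv b₁ x * (U y - c) * fr y)
    (hp₁ : p₁ = fun x y => b₁ x) :
    (∀ x : ℝ, ∀ y ∈ Set.Ioo (0 : ℝ) h₀,
      (U y - c) * pdX u₁ x y + deriv U y * v₁ x y = -(pdX p₁ x y)) ∧
    (∀ x : ℝ, ∀ y ∈ Set.Ioo (0 : ℝ) h₀, pdY p₁ x y = 0) ∧
    (∀ x : ℝ, ∀ y ∈ Set.Ioo (0 : ℝ) h₀, pdX u₁ x y + pdY v₁ x y = 0) ∧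
    (∀ x : ℝ, v₁ x 0 = 0) ∧
    ((∫ y in (0 : ℝ)..h₀, 1 / (U y - c) ^ 2) = 1 / g →
      ∀ η₁ : ℝ → ℝ, η₁ = (fun x => b₁ x / g) →
      ∀ x : ℝ, v₁ x h₀ = (U h₀ - c) * deriv η₁ x) := by
  have hne : ∀ y ∈ Icc 0 h₀, U y - c ≠ 0 := fun y hy => (sub_neg.mpr (hc y hy)).ne
  have hpdXu : ∀ x y, pdX u₁ x y = -deriv b₁ x * (deriv U y * fr y + 1 / (U y - c)) := by
    intro x y
    rw [hu₁, pdX_mul (fun x => -b₁ x), deriv.fun_neg]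
  have hpdYv : ∀ x, ∀ y ∈ Ioo 0 h₀,
      pdY v₁ x y = deriv b₁ x * (deriv U y * fr y + 1 / (U y - c)) := by
    intro x y hy
    have hv₁' : v₁ = fun x y => deriv b₁ x * ((U y - c) * fr y) := by simp only [hv₁, mul_assoc]
    have hyI := Ioo_subset_Icc_self hy
    have hfr' : HasDerivAt fr (1 / (U y - c) ^ 2) y := by
      rw [hfr]
      refine hasDerivAt_integral_of_continuousOn_Icc ?_ hy
      exact continuousOn_const.div ((hU.continuousOn.sub continuousOn_const).pow 2)
        fun z hz => pow_ne_zero 2 (hne z hz)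
    have hUy : DifferentiableAt ℝ U y :=
      (hU.differentiableOn one_ne_zero y hyI).differentiableAt (Icc_mem_nhds hy.1 hy.2)
    rw [hv₁', pdY_mul, (hasDerivAt_sub_mul_of_hasDerivAt_inv_sq hUy hfr' (hne y hyI)).deriv]
  refine ⟨fun x y hy => ?_, fun x y _ => ?_, fun x y hy => ?_, fun x => ?_, ?_⟩
  · have := hne y (Ioo_subset_Icc_self hy)
    rw [hpdXu, hv₁, hp₁, pdX_apply_left]
    field_simp
    ring
  · rw [hp₁]
    exact pdY_apply_left b₁ x y
  · rw [hpdXu, hpdYv x y hy]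
    ring
  · simp [hv₁, hfr]
  · intro hBurns η₁ hη₁ x
    rw [hv₁, hη₁, deriv_div_const]
    simp only [hfr, hBurns]
    ring

/-- With `fr(y) = ∫₀^y (U(z)-c)⁻² dz`, the fields
`u₁ = -b₁(x)(U'(y)fr(y) + 1/(U(y)-c))`, `v₁ = b₁'(x)(U(y)-c)fr(y)`, `p₁ = b₁(x)` satisfy
the first-order long-wave Euler system and bottom condition; and under the Burns
condition, with `η₁ = b₁/g`, the kinematic surface condition holds. -/
theorem stmt13 (g h₀ c : ℝ) (hg : 0 < g) (hh₀ : 0 < h₀)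
    (U : ℝ → ℝ) (hU : ContDiffOn ℝ 1 U (Set.Icc 0 h₀))
    (hc : ∀ y ∈ Set.Icc (0 : ℝ) h₀, U y < c)
    (b₁ : ℝ → ℝ) (hb₁ : ContDiff ℝ 1 b₁)
    (fr : ℝ → ℝ) (hfr : fr = fun y => ∫ z in (0 : ℝ)..y, 1 / (U z - c) ^ 2)
    (u₁ v₁ p₁ : ℝ → ℝ → ℝ)
    (hu₁ : u₁ = fun x y => -(b₁ x) * (deriv U y * fr y + 1 / (U y - c)))
    (hv₁ : v₁ = fun x y => deriv b₁ x * (U y - c) * fr y)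
    (hp₁ : p₁ = fun x y => b₁ x) :
    (∀ x : ℝ, ∀ y ∈ Set.Ioo (0 : ℝ) h₀,
      (U y - c) * pdX u₁ x y + deriv U y * v₁ x y = -(pdX p₁ x y)) ∧
    (∀ x : ℝ, ∀ y ∈ Set.Ioo (0 : ℝ) h₀, pdY p₁ x y = 0) ∧
    (∀ x : ℝ, ∀ y ∈ Set.Ioo (0 : ℝ) h₀, pdX u₁ x y + pdY v₁ x y = 0) ∧
    (∀ x : ℝ, v₁ x 0 = 0) ∧
    ((∫ y in (0 : ℝ)..h₀, 1 / (U y - c) ^ 2) = 1 / g →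
      ∀ η₁ : ℝ → ℝ, η₁ = (fun x => b₁ x / g) →
      ∀ x : ℝ, v₁ x h₀ = (U h₀ - c) * deriv η₁ x) :=
  stmt13_general g h₀ c U hU hc b₁ fr hfr u₁ v₁ p₁ hu₁ hv₁ hp₁
end
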